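/- arXiv:1808.03019 — 9 statements merged into one kernel-verified Lean document; each statement's English description precedes it below -/
import Mathlib

section
/- Let (X_n)_{n≥1} be nonnegative real-valued random variables on a common probability space, all having the same distribution, and suppose this common distribution has finite logarithmic moment, i.e. E[log(1 + X_1)] < ∞. Then for every c ∈ (0,1), the series ∑_{n=1}^∞ cⁿ X_n converges almost surely. -/
open MeasureTheory ProbabilityTheory Filter

/-!
Since `log (1 + X n)` has the integrable law of `log (1 + X 0)`, the tail bound
`∑ P(log (1 + X 0) > ε n) < ∞` and Borel–Cantelli give, for every `ε > 0`, almost surely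
`log (1 + X n) ≤ ε n` for all large `n`, i.e. `X n ≤ exp (ε n)`.
Choosing `ε = log (r / c)` with `c < r < 1` dominates `c ^ n * X n` by the geometric sequence `r ^ n`.
-/

theorem ae_eventually_le_natCast_of_identDistrib {Ω : Type*} [MeasurableSpace Ω]
    {μ : Measure Ω} [IsProbabilityMeasure μ] {Y : ℕ → Ω → ℝ}
    (hident : ∀ n, IdentDistrib (Y n) (Y 0) μ μ) (hint : Integrable (Y 0) μ) :
    ∀ᵐ ω ∂μ, ∀ᶠ n in atTop, Y n ω ≤ n := by
  let _ : MeasureSpace Ω := ⟨μ⟩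
  have htail : ∑' n : ℕ, μ {ω | |Y 0 ω| ∈ Set.Ioi (n : ℝ)} ≠ ⊤ :=
    (tsum_prob_mem_Ioi_lt_top hint.abs fun ω => abs_nonneg _).ne
  have hle (n : ℕ) : μ {ω | (n : ℝ) < Y n ω} ≤ μ {ω | |Y 0 ω| ∈ Set.Ioi (n : ℝ)} :=
    calc μ {ω | (n : ℝ) < Y n ω} ≤ μ {ω | |Y n ω| ∈ Set.Ioi (n : ℝ)} :=
          measure_mono fun ω (h : (n : ℝ) < Y n ω) => h.trans_le (le_abs_self _)
      _ = μ {ω | |Y 0 ω| ∈ Set.Ioi (n : ℝ)} :=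
          (hident n).measure_mem_eq (measurableSet_Ioi.preimage measurable_abs)
  filter_upwards [ae_eventually_notMem (ne_top_of_le_ne_top htail (ENNReal.tsum_le_tsum hle))]
    with ω hω
  exact hω.mono fun n hn => not_lt.1 hn

theorem ae_eventually_le_mul_natCast_of_identDistrib {Ω : Type*} [MeasurableSpace Ω]
    {μ : Measure Ω} [IsProbabilityMeasure μ] {Y : ℕ → Ω → ℝ}
    (hident : ∀ n, IdentDistrib (Y n) (Y 0) μ μ) (hint : Integrable (Y 0) μ)
    {ε : ℝ} (hε : 0 < ε) :
    ∀ᵐ ω ∂μ, ∀ᶠ n in atTop, Y n ω ≤ ε * n := by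
  have hscaled := ae_eventually_le_natCast_of_identDistrib (Y := fun n ω => ε⁻¹ * Y n ω)
    (fun n => (hident n).comp (measurable_const_mul ε⁻¹)) (hint.const_mul ε⁻¹)
  filter_upwards [hscaled] with ω hω
  exact hω.mono fun n hn => by rwa [inv_mul_le_iff₀ hε] at hn

theorem le_pow_of_log_one_add_le_mul {x a : ℝ} {n : ℕ} (hx : 0 ≤ x)
    (h : Real.log (1 + x) ≤ n * Real.log a) (ha : 0 < a) : x ≤ a ^ n :=
  calc x ≤ 1 + x := by linarith
    _ = Real.exp (Real.log (1 + x)) := (Real.exp_log (by linarith)).symm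
    _ ≤ Real.exp (n * Real.log a) := Real.exp_le_exp.2 h
    _ = a ^ n := by rw [Real.exp_nat_mul, Real.exp_log ha]

theorem summable_pow_mul_of_eventually_le_pow {x : ℕ → ℝ} {c a : ℝ} (hx : ∀ n, 0 ≤ x n)
    (hc : 0 ≤ c) (ha : 0 ≤ a) (hca : c * a < 1) (h : ∀ᶠ n in atTop, x n ≤ a ^ n) :
    Summable fun n => c ^ n * x n := by
  refine (summable_geometric_of_lt_one (mul_nonneg hc ha) hca).of_norm_bounded_eventually_nat ?_
  filter_upwards [h] with n hn
  rw [Real.norm_of_nonneg (mul_nonneg (pow_nonneg hc n) (hx n)), mul_pow]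
  exact mul_le_mul_of_nonneg_left hn (pow_nonneg hc n)

/-- If the `X n` are nonnegative, identically distributed random variables
(not assumed independent) whose common distribution has finite logarithmic moment
`E[log (1 + X)] < ∞`, then `∑ c ^ n * X n` converges almost surely for every `c ∈ (0,1)`. -/
theorem stmt_2 {Ω : Type*} [MeasurableSpace Ω] (μ : Measure Ω) [IsProbabilityMeasure μ]
    (X : ℕ → Ω → ℝ)
    (hnonneg : ∀ n ω, 0 ≤ X n ω)
    (hident : ∀ n, IdentDistrib (X n) (X 0) μ μ)
    (hlog : Integrable (fun ω => Real.log (1 + X 0 ω)) μ)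
    (c : ℝ) (hc : c ∈ Set.Ioo (0 : ℝ) 1) :
    ∀ᵐ ω ∂μ, Summable (fun n => c ^ n * X n ω) := by
  obtain ⟨hc0, hc1⟩ := hc
  obtain ⟨r, hcr, hr1⟩ := exists_between hc1
  have ha : 0 < r / c := div_pos (hc0.trans hcr) hc0
  have hlog_ident (n : ℕ) : IdentDistrib (fun ω => Real.log (1 + X n ω))
      (fun ω => Real.log (1 + X 0 ω)) μ μ :=
    (hident n).comp (Real.measurable_log.comp (measurable_const_add 1))
  filter_upwards [ae_eventually_le_mul_natCast_of_identDistrib hlog_ident hlog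
    (Real.log_pos ((one_lt_div hc0).2 hcr))] with ω hω
  refine summable_pow_mul_of_eventually_le_pow (fun n => hnonneg n ω) hc0.le ha.le
    (by rwa [mul_div_cancel₀ r hc0.ne']) (hω.mono fun n hn => ?_)
  exact le_pow_of_log_one_add_le_mul (hnonneg n ω) (by linarith) ha
end

section
/- Let k be a natural number, let g : {0,1}^k → {0,1} be an arbitrary function, and for σ ∈ {0,1}^k say that coordinate i is pivotal for g at σ if flipping the i-th coordinate of σ changes the value of g. Let p ∈ (0,1), set ν(1) = p and ν(0) = 1 − p, and let μ_p be the product measure on {0,1}^k giving each σ probability ∏_i ν(σ_i). Then for every a, b ∈ {0,1}: (1/ν(b)) · ∑_{σ : g(σ)=a} μ_p({σ}) · #{i : σ_i = b and i is pivotal for g at σ} = (1/ν(1−b)) · ∑_{σ : g(σ)=1−a} μ_p({σ}) · #{i : σ_i = 1−b and i is pivotal for g at σ}. -/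
/-!
Flipping a pivotal coordinate `i` of `σ` toggles the value of `g`, the bit `σ i`, and keeps `i`
pivotal, so `(σ, i) ↦ (σ with bit i flipped, i)` is an involution matching the pivotal pairs
counted on the two sides. Dividing the weight of `σ` by `ν (σ i)` leaves `∏_{j ≠ i} ν (σ j)`,
which the flip does not change.
-/

open Finset

namespace PivotalFlip

variable {ι R : Type*} [DecidableEq ι]

def flipAt (σ : ι → Bool) (i : ι) : ι → Bool := Function.update σ i (!σ i)

def IsPivotal (g : (ι → Bool) → Bool) (σ : ι → Bool) (i : ι) : Prop := g (flipAt σ i) ≠ g σ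

instance (g : (ι → Bool) → Bool) (σ : ι → Bool) (i : ι) : Decidable (IsPivotal g σ i) :=
  inferInstanceAs (Decidable (_ ≠ _))

@[simp]
lemma flipAt_self (σ : ι → Bool) (i : ι) : flipAt σ i i = !σ i :=
  Function.update_self i _ σ

lemma flipAt_of_ne (σ : ι → Bool) {i j : ι} (h : j ≠ i) : flipAt σ i j = σ j :=
  Function.update_of_ne h _ σ

@[simp]
lemma flipAt_flipAt (σ : ι → Bool) (i : ι) : flipAt (flipAt σ i) i = σ := by
  rw [flipAt, flipAt_self, Bool.not_not, flipAt, Function.update_idem, Function.update_eq_self]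

lemma flipAt_involutive (i : ι) : Function.Involutive fun σ : ι → Bool => flipAt σ i :=
  fun σ => flipAt_flipAt σ i

lemma isPivotal_flipAt_iff {g : (ι → Bool) → Bool} {σ : ι → Bool} {i : ι} :
    IsPivotal g (flipAt σ i) i ↔ IsPivotal g σ i := by
  rw [IsPivotal, IsPivotal, flipAt_flipAt, ne_comm]

lemma IsPivotal.apply_flipAt {g : (ι → Bool) → Bool} {σ : ι → Bool} {i : ι}
    (h : IsPivotal g σ i) : g (flipAt σ i) = !g σ :=
  Bool.eq_not.mpr h

lemma prod_erase_flipAt [Fintype ι] [CommMonoid R] (ν : Bool → R) (σ : ι → Bool) (i : ι) :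
    ∏ j ∈ univ.erase i, ν (flipAt σ i j) = ∏ j ∈ univ.erase i, ν (σ j) :=
  prod_congr rfl fun _ hj => by rw [flipAt_of_ne σ (ne_of_mem_erase hj)]

def pivotalMass [Fintype ι] [CommSemiring R] (g : (ι → Bool) → Bool) (ν : Bool → R)
    (a b : Bool) : R :=
  ∑ i, ∑ σ, if g σ = a ∧ σ i = b ∧ IsPivotal g σ i then ∏ j ∈ univ.erase i, ν (σ j) else 0

lemma pivotalMass_not_not [Fintype ι] [CommSemiring R] (g : (ι → Bool) → Bool) (ν : Bool → R)
    (a b : Bool) :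
    pivotalMass g ν (!a) (!b) = pivotalMass g ν a b := by
  refine sum_congr rfl fun i _ => ?_
  refine Fintype.sum_bijective _ (flipAt_involutive i).bijective _ _ fun σ => ?_
  by_cases hpiv : IsPivotal g σ i
  · simp only [isPivotal_flipAt_iff, hpiv, hpiv.apply_flipAt, flipAt_self,
      Bool.not_eq_eq_eq_not, prod_erase_flipAt, and_true]
  · simp only [isPivotal_flipAt_iff, hpiv, and_false, if_false]

lemma inv_mul_sum_eq_pivotalMass [Fintype ι] [Semifield R] (g : (ι → Bool) → Bool)
    (ν : Bool → R) {a b : Bool} (hb : ν b ≠ 0) :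
    (ν b)⁻¹ * ∑ σ : ι → Bool, (if g σ = a then
        (∏ i, ν (σ i)) * ((univ.filter fun i => σ i = b ∧ IsPivotal g σ i).card : R) else 0) =
      pivotalMass g ν a b := by
  rw [pivotalMass, sum_comm, mul_sum]
  refine sum_congr rfl fun σ _ => ?_
  by_cases ha : g σ = a
  · rw [if_pos ha, card_filter, Nat.cast_sum, mul_sum, mul_sum]
    refine sum_congr rfl fun i _ => ?_
    by_cases h : σ i = b ∧ IsPivotal g σ i
    · rw [if_pos h, if_pos ⟨ha, h⟩, Nat.cast_one, mul_one, ← mul_prod_erase univ _ (mem_univ i),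
        h.1, inv_mul_cancel_left₀ hb]
    · rw [if_neg h, if_neg fun h' => h h'.2, Nat.cast_zero, mul_zero, mul_zero]
  · rw [if_neg ha, mul_zero]
    exact (sum_eq_zero fun i _ => if_neg fun h => ha h.1).symm

end PivotalFlip

open PivotalFlip in
/-- Let `g : {0,1}^k → {0,1}` and say coordinate `i` is pivotal for `g`
at `σ` if flipping it changes the value of `g`. With `ν true = p`, `ν false = 1 - p`
and the corresponding product measure weight `∏ i, ν (σ i)`, for all `a b ∈ {0,1}`:
`(1/ν b) ∑_{σ : g σ = a} weight(σ) ⬝ #{pivotal i with σ i = b}`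
`= (1/ν (¬b)) ∑_{σ : g σ = ¬a} weight(σ) ⬝ #{pivotal i with σ i = ¬b}`. -/
theorem stmt_4 (k : ℕ) (g : (Fin k → Bool) → Bool) (p : ℝ) (hp : p ∈ Set.Ioo (0 : ℝ) 1)
    (ν : Bool → ℝ) (hν1 : ν true = p) (hν0 : ν false = 1 - p) (a b : Bool) :
    (ν b)⁻¹ * ∑ σ : Fin k → Bool, (if g σ = a then
        (∏ i, ν (σ i)) *
          ((Finset.univ.filter fun i : Fin k =>
              σ i = b ∧ g (Function.update σ i (!(σ i))) ≠ g σ).card : ℝ)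
      else 0)
    = (ν (!b))⁻¹ * ∑ σ : Fin k → Bool, (if g σ = !a then
        (∏ i, ν (σ i)) *
          ((Finset.univ.filter fun i : Fin k =>
              σ i = !b ∧ g (Function.update σ i (!(σ i))) ≠ g σ).card : ℝ)
      else 0) := by
  have hν : ∀ c, ν c ≠ 0 := by
    rintro (_ | _)
    · rw [hν0]; exact (sub_pos.2 hp.2).ne'
    · rw [hν1]; exact hp.1.ne'
  calc _ = pivotalMass g ν a b := inv_mul_sum_eq_pivotalMass g ν (hν b)
    _ = pivotalMass g ν (!a) (!b) := (pivotalMass_not_not g ν a b).symm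
    _ = _ := (inv_mul_sum_eq_pivotalMass g ν (hν (!b))).symm
end

section
/- The function h(x) = x / (1 − e^{−x}(1 + x)) is convex on (0, ∞), tends to +∞ both as x → 0⁺ and as x → ∞, and attains its infimum over (0, ∞) at a unique point x* ∈ (0, ∞). -/
/-!
The denominator `G x = 1 - e^{-x} (1 + x)` satisfies `G' x = x e^{-x}`, and a direct
computation gives `h'' x = x e^{-x} F x / G x ^ 3` with `F x = x - 3 + (x² + 2x + 3) e^{-x}`.
Since `F 0 = 0` and `F' x = 1 - (x² + 1) e^{-x} > 0`, `h` is strictly convex on `(0, ∞)`.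
The bounds `G x ≤ x²` and `G x < 1` give `1 / x ≤ h x` and `x < h x`, so `h` blows up at both
ends; a continuous function with this property attains its minimum, which strict convexity makes
unique.
-/

open Filter Set Real Topology

theorem exists_isMinOn_Ioi_zero_of_tendsto_atTop {f : ℝ → ℝ} (hf : ContinuousOn f (Ioi 0))
    (h_zero : Tendsto f (𝓝[>] 0) atTop) (h_atTop : Tendsto f atTop atTop) :
    ∃ x ∈ Ioi (0 : ℝ), IsMinOn f (Ioi 0) x := by
  have hcont : Continuous (f ∘ exp) := hf.comp_continuous continuous_exp exp_pos
  have hlim : Tendsto (f ∘ exp) (cocompact ℝ) atTop := by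
    rw [cocompact_eq_atBot_atTop, tendsto_sup]
    exact ⟨h_zero.comp tendsto_exp_atBot_nhdsGT, h_atTop.comp tendsto_exp_atTop⟩
  obtain ⟨t, ht⟩ := hcont.exists_forall_le hlim
  refine ⟨exp t, exp_pos t, fun y (hy : 0 < y) => ?_⟩
  simpa [exp_log hy] using ht (log y)

noncomputable def gammaTwoCDF (x : ℝ) : ℝ := 1 - exp (-x) * (1 + x)

noncomputable def xDivGammaTwoCDF (x : ℝ) : ℝ := x / gammaTwoCDF x

noncomputable def convexityFactor (x : ℝ) : ℝ := x - 3 + (x ^ 2 + 2 * x + 3) * exp (-x)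

lemma exp_neg_mul_lt_one {x a : ℝ} (h : a < exp x) : exp (-x) * a < 1 := by
  calc exp (-x) * a < exp (-x) * exp x := mul_lt_mul_of_pos_left h (exp_pos _)
    _ = 1 := by rw [← exp_add, neg_add_cancel, exp_zero]

lemma gammaTwoCDF_pos {x : ℝ} (hx : 0 < x) : 0 < gammaTwoCDF x := by
  have := exp_neg_mul_lt_one (by linarith [add_one_lt_exp hx.ne'] : 1 + x < exp x)
  unfold gammaTwoCDF
  linarith

lemma gammaTwoCDF_lt_one {x : ℝ} (hx : 0 < x) : gammaTwoCDF x < 1 := by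
  unfold gammaTwoCDF
  nlinarith [exp_pos (-x)]

lemma gammaTwoCDF_le_sq {x : ℝ} (hx : 0 < x) : gammaTwoCDF x ≤ x ^ 2 := by
  have := add_one_le_exp (-x)
  unfold gammaTwoCDF
  nlinarith

lemma hasDerivAt_gammaTwoCDF (x : ℝ) : HasDerivAt gammaTwoCDF (x * exp (-x)) x := by
  have := (((hasDerivAt_neg x).exp).mul ((hasDerivAt_id x).const_add 1)).const_sub 1
  exact this.congr_deriv (by simp only [id_eq]; ring)

lemma hasDerivAt_xDivGammaTwoCDF {x : ℝ} (hx : 0 < x) :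
    HasDerivAt xDivGammaTwoCDF
      ((gammaTwoCDF x - x ^ 2 * exp (-x)) / gammaTwoCDF x ^ 2) x := by
  have := (hasDerivAt_id x).div (hasDerivAt_gammaTwoCDF x) (gammaTwoCDF_pos hx).ne'
  exact this.congr_deriv (by simp only [id_eq]; ring)

lemma hasDerivAt_deriv_xDivGammaTwoCDF {x : ℝ} (hx : 0 < x) :
    HasDerivAt (fun y => (gammaTwoCDF y - y ^ 2 * exp (-y)) / gammaTwoCDF y ^ 2)
      (x * exp (-x) * convexityFactor x / gammaTwoCDF x ^ 3) x := by
  have hG := (gammaTwoCDF_pos hx).ne'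
  have hnum := (hasDerivAt_gammaTwoCDF x).sub ((hasDerivAt_pow 2 x).mul (hasDerivAt_neg x).exp)
  have := hnum.div ((hasDerivAt_gammaTwoCDF x).pow 2) (pow_ne_zero 2 hG)
  refine this.congr_deriv ?_
  simp only [Pi.pow_apply, Pi.sub_apply, Pi.mul_apply]
  rw [div_eq_div_iff (pow_ne_zero _ (pow_ne_zero 2 hG)) (pow_ne_zero 3 hG)]
  simp only [gammaTwoCDF, convexityFactor]
  ring

lemma sq_add_one_lt_exp {x : ℝ} (hx : 0 < x) : x ^ 2 + 1 < exp x := by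
  have h := sum_le_exp_of_nonneg hx.le 4
  norm_num [Finset.sum_range_succ, Nat.factorial] at h
  nlinarith [mul_nonneg hx.le (sq_nonneg (x - 3 / 2))]

lemma convexityFactor_pos {x : ℝ} (hx : 0 < x) : 0 < convexityFactor x := by
  have hderiv (y : ℝ) : HasDerivAt convexityFactor (1 - (y ^ 2 + 1) * exp (-y)) y := by
    have := ((hasDerivAt_id y).sub_const 3).add
      ((((hasDerivAt_pow 2 y).add ((hasDerivAt_id y).const_mul 2)).add_const 3).mul
        (hasDerivAt_neg y).exp)
    exact this.congr_deriv (by simp only [Nat.cast_ofNat, id_eq, Pi.add_apply]; ring)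
  have hmono : StrictMonoOn convexityFactor (Ici 0) := by
    refine strictMonoOn_of_deriv_pos (convex_Ici 0)
      (fun y _ => (hderiv y).continuousAt.continuousWithinAt) fun y hy => ?_
    rw [interior_Ici] at hy
    rw [(hderiv y).deriv, sub_pos, mul_comm]
    exact exp_neg_mul_lt_one (sq_add_one_lt_exp hy)
  simpa [convexityFactor] using hmono self_mem_Ici hx.le hx

lemma strictConvexOn_xDivGammaTwoCDF : StrictConvexOn ℝ (Ioi 0) xDivGammaTwoCDF := by
  refine strictConvexOn_of_deriv2_pos (convex_Ioi 0)
    (fun y hy => (hasDerivAt_xDivGammaTwoCDF hy).continuousAt.continuousWithinAt)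
    fun x hx => ?_
  rw [interior_Ioi] at hx
  have hderiv : deriv xDivGammaTwoCDF =ᶠ[𝓝 x]
      fun y => (gammaTwoCDF y - y ^ 2 * exp (-y)) / gammaTwoCDF y ^ 2 := by
    filter_upwards [Ioi_mem_nhds hx] with y hy using (hasDerivAt_xDivGammaTwoCDF hy).deriv
  rw [Function.iterate_succ_apply, Function.iterate_one, hderiv.deriv_eq,
    (hasDerivAt_deriv_xDivGammaTwoCDF hx).deriv]
  exact div_pos (mul_pos (mul_pos hx (exp_pos _)) (convexityFactor_pos hx))
    (pow_pos (gammaTwoCDF_pos hx) 3)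

lemma tendsto_xDivGammaTwoCDF_nhdsGT_zero :
    Tendsto xDivGammaTwoCDF (𝓝[>] 0) atTop := by
  refine tendsto_atTop_mono' _ ?_ tendsto_inv_nhdsGT_zero
  filter_upwards [self_mem_nhdsWithin] with x (hx : 0 < x)
  rw [xDivGammaTwoCDF, inv_eq_one_div, div_le_div_iff₀ hx (gammaTwoCDF_pos hx), one_mul, ← sq]
  exact gammaTwoCDF_le_sq hx

lemma tendsto_xDivGammaTwoCDF_atTop : Tendsto xDivGammaTwoCDF atTop atTop := by
  refine tendsto_atTop_mono' _ ?_ tendsto_id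
  filter_upwards [eventually_gt_atTop 0] with x hx
  rw [id, xDivGammaTwoCDF, le_div_iff₀ (gammaTwoCDF_pos hx)]
  nlinarith [gammaTwoCDF_lt_one hx]

/-- The function `h x = x / (1 - e^{-x} (1 + x))` is convex on `(0, ∞)`,
tends to `+∞` as `x → 0⁺` and as `x → ∞`, and attains its infimum over `(0, ∞)` at a
unique point. -/
theorem stmt_6 :
    ConvexOn ℝ (Set.Ioi (0 : ℝ)) (fun x => x / (1 - Real.exp (-x) * (1 + x))) ∧
    Tendsto (fun x => x / (1 - Real.exp (-x) * (1 + x)))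
      (nhdsWithin 0 (Set.Ioi (0 : ℝ))) atTop ∧
    Tendsto (fun x => x / (1 - Real.exp (-x) * (1 + x))) atTop atTop ∧
    (∃! xstar : ℝ, xstar ∈ Set.Ioi (0 : ℝ) ∧ ∀ y ∈ Set.Ioi (0 : ℝ),
      xstar / (1 - Real.exp (-xstar) * (1 + xstar)) ≤ y / (1 - Real.exp (-y) * (1 + y))) := by
  have hconvex := strictConvexOn_xDivGammaTwoCDF
  obtain ⟨x₀, hx₀, hmin⟩ := exists_isMinOn_Ioi_zero_of_tendsto_atTop
    (by simpa using hconvex.convexOn.continuousOn_interior)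
    tendsto_xDivGammaTwoCDF_nhdsGT_zero tendsto_xDivGammaTwoCDF_atTop
  refine ⟨hconvex.convexOn, tendsto_xDivGammaTwoCDF_nhdsGT_zero,
    tendsto_xDivGammaTwoCDF_atTop, x₀, ⟨hx₀, hmin⟩, fun y ⟨hy, hymin⟩ => ?_⟩
  exact hconvex.eq_of_isMinOn hymin hmin hy hx₀
end

section
/- Let λ_crit = inf_{x>0} x / (1 − e^{−x}(1 + x)) and let x* be the unique minimizer of x / (1 − e^{−x}(1 + x)) on (0, ∞). For λ = λ_crit, the equation 1 − e^{−λx}(1 + λx) = x has exactly two solutions x in [0,1], namely x = 0 and x = x*/λ_crit, and the latter lies in (0,1). -/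
/-!
Write `Ψ y = 1 - e^{-y}(1 + y)` and `λ = x*/Ψ(x*)` for the minimal value of `y ↦ y/Ψ(y)`.
For `x > 0`, `Ψ(λx) = x` says exactly that `λx/Ψ(λx) = λ`, i.e. that `λx` is a minimiser,
so by uniqueness `λx = x*`. The root `x*/λ = Ψ(x*)` lies in `(0, 1)` because `Ψ` maps
`(0, ∞)` into `(0, 1)`.
-/

open Set Real

theorem IsMinOn.csInf_image_eq {α β : Type*} [ConditionallyCompleteLattice β] {f : α → β}
    {s : Set α} {a : α} (ha : a ∈ s) (h : IsMinOn f s a) : sInf (f '' s) = f a :=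
  IsLeast.csInf_eq ⟨mem_image_of_mem f ha, forall_mem_image.2 fun _ hy => h hy⟩

theorem apply_mul_eq_self_iff_of_isMinOn {Ψ : ℝ → ℝ} {xstar lam x : ℝ}
    (hmin : IsMinOn (fun y => y / Ψ y) (Ioi 0) xstar)
    (huniq : ∀ z ∈ Ioi (0 : ℝ), IsMinOn (fun y => y / Ψ y) (Ioi 0) z → z = xstar)
    (hlam : xstar / Ψ xstar = lam) (hlam_pos : 0 < lam) (hx : 0 < x) :
    Ψ (lam * x) = x ↔ x = xstar / lam := by
  have hxstar : xstar ≠ 0 := by rintro rfl; simp [← hlam] at hlam_pos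
  constructor
  · intro hfix
    have hvalue : lam * x / Ψ (lam * x) = lam := by rw [hfix]; field_simp
    have hmin' : IsMinOn (fun y => y / Ψ y) (Ioi 0) (lam * x) := fun y hy => by
      show lam * x / Ψ (lam * x) ≤ y / Ψ y
      rw [hvalue, ← hlam]
      exact hmin hy
    rw [eq_div_iff hlam_pos.ne', mul_comm]
    exact huniq _ (mul_pos hlam_pos hx) hmin'
  · rintro rfl
    rw [mul_div_cancel₀ _ hlam_pos.ne', ← hlam, div_div_cancel₀ hxstar]

theorem one_sub_exp_neg_mul_one_add_pos {y : ℝ} (hy : 0 < y) :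
    0 < 1 - exp (-y) * (1 + y) := by
  have h := mul_lt_mul_of_pos_left (add_one_lt_exp hy.ne') (exp_pos (-y))
  rw [← exp_add, neg_add_cancel, exp_zero, add_comm] at h
  linarith

theorem one_sub_exp_neg_mul_one_add_lt_one {y : ℝ} (hy : 0 ≤ y) :
    1 - exp (-y) * (1 + y) < 1 := by
  have := mul_pos (exp_pos (-y)) (by linarith : (0 : ℝ) < 1 + y)
  linarith

/-- Let `λ_crit = inf_{x>0} x / (1 - e^{-x}(1+x))` and let `x*` be the
unique minimizer of `x / (1 - e^{-x}(1+x))` on `(0, ∞)`. For `λ = λ_crit`, the equation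
`1 - e^{-λx}(1 + λx) = x` has exactly two solutions in `[0,1]`, namely `x = 0` and
`x = x*/λ_crit`, and the latter lies in `(0,1)`. -/
theorem stmt_8 (xstar : ℝ) (hxstar : xstar ∈ Set.Ioi (0 : ℝ))
    (hmin : ∀ y ∈ Set.Ioi (0 : ℝ),
      xstar / (1 - Real.exp (-xstar) * (1 + xstar)) ≤ y / (1 - Real.exp (-y) * (1 + y)))
    (huniq : ∀ z ∈ Set.Ioi (0 : ℝ),
      (∀ y ∈ Set.Ioi (0 : ℝ),
        z / (1 - Real.exp (-z) * (1 + z)) ≤ y / (1 - Real.exp (-y) * (1 + y))) → z = xstar) :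
    xstar / sInf ((fun x => x / (1 - Real.exp (-x) * (1 + x))) '' Set.Ioi (0 : ℝ))
        ∈ Set.Ioo (0 : ℝ) 1 ∧
    ∀ x ∈ Set.Icc (0 : ℝ) 1,
      (1 - Real.exp
            (-(sInf ((fun x => x / (1 - Real.exp (-x) * (1 + x))) '' Set.Ioi (0 : ℝ)) * x)) *
          (1 + sInf ((fun x => x / (1 - Real.exp (-x) * (1 + x))) '' Set.Ioi (0 : ℝ)) * x) = x
        ↔ x = 0 ∨
          x = xstar / sInf ((fun x => x / (1 - Real.exp (-x) * (1 + x))) '' Set.Ioi (0 : ℝ))) := by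
  have hΨ : 1 - exp (-xstar) * (1 + xstar) ∈ Ioo 0 1 :=
    ⟨one_sub_exp_neg_mul_one_add_pos hxstar, one_sub_exp_neg_mul_one_add_lt_one hxstar.le⟩
  rw [IsMinOn.csInf_image_eq (f := fun x => x / (1 - exp (-x) * (1 + x))) hxstar hmin]
  set lam := xstar / (1 - exp (-xstar) * (1 + xstar)) with hlam
  have hlam_pos : 0 < lam := div_pos hxstar hΨ.1
  refine ⟨by rwa [hlam, div_div_cancel₀ hxstar.ne'], fun x hx => ?_⟩
  rcases hx.1.eq_or_lt with rfl | hx_pos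
  · simp
  · rw [apply_mul_eq_self_iff_of_isMinOn (Ψ := fun y => 1 - exp (-y) * (1 + y)) hmin huniq
      hlam.symm hlam_pos hx_pos]
    simp [hx_pos.ne']
end

section
/- Let λ_crit = inf_{x>0} x / (1 − e^{−x}(1 + x)). If λ > λ_crit, then the equation 1 − e^{−λx}(1 + λx) = x has exactly three solutions x in [0,1]: x = 0 and two further solutions a < b, both lying in the open interval (0,1). -/
/-!
Write `g x = Ψ_λ x - x`. Its derivative `λ² x e^{-λx} - 1` increases on `[0, 1/λ]` and decreases
afterwards. Since `1 - e^{-s}(1 + s) ≤ s / e`, the hypothesis `λ > λ_crit` forces `λ > e`, so this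
derivative is `-1` at `0`, `λ/e - 1 > 0` at `1/λ` and `λ² e^{-λ} - 1 < 0` at `1`: on `[0, 1]` the
function `g` decreases, then increases, then decreases. As `g 0 = 0`, `g 1 < 0`, and `g > 0` at
`s / λ` for any `s > 0` with `s < λ (1 - e^{-s}(1 + s))`, each of the last two monotone pieces
contains exactly one zero and the first one contains none besides `0`.
-/

open Real Set

/-- `P(Poisson(s) ≥ 2)`; the map of the statement is `Ψ_λ x = poissonGeTwo (λ * x)`. -/
noncomputable def poissonGeTwo (s : ℝ) : ℝ := 1 - exp (-s) * (1 + s)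

lemma poissonGeTwo_zero : poissonGeTwo 0 = 0 := by simp [poissonGeTwo]

lemma poissonGeTwo_lt_one {s : ℝ} (hs : -1 < s) : poissonGeTwo s < 1 := by
  have : 0 < exp (-s) * (1 + s) := mul_pos (exp_pos _) (by linarith)
  unfold poissonGeTwo
  linarith

lemma poissonGeTwo_pos {s : ℝ} (hs : 0 < s) : 0 < poissonGeTwo s := by
  have h : exp (-s) * (1 + s) < exp (-s) * exp s := by
    gcongr
    linarith [add_one_lt_exp hs.ne']
  rw [← exp_add, neg_add_cancel, exp_zero] at h
  exact sub_pos.2 h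

lemma hasDerivAt_poissonGeTwo (s : ℝ) : HasDerivAt poissonGeTwo (s * exp (-s)) s :=
  (((hasDerivAt_neg s).exp.mul ((hasDerivAt_id' s).const_add 1)).const_sub 1).congr_deriv
    (by ring)

lemma poissonGeTwo_le_mul_exp_neg_one {s : ℝ} (hs : 0 ≤ s) : poissonGeTwo s ≤ s * exp (-1) := by
  have hmono : Monotone fun t => t * exp (-1) - poissonGeTwo t :=
    monotone_of_hasDerivAt_nonneg
      (fun t => ((hasDerivAt_mul_const (exp (-1))).sub (hasDerivAt_poissonGeTwo t)).congr_deriv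
        (by simp))
      (fun t => sub_nonneg.2 (mul_exp_neg_le_exp_neg_one t))
  simpa [poissonGeTwo_zero] using hmono hs

lemma hasDerivAt_mul_exp_neg (s : ℝ) :
    HasDerivAt (fun s => s * exp (-s)) (exp (-s) * (1 - s)) s :=
  ((hasDerivAt_id' s).mul (hasDerivAt_neg s).exp).congr_deriv (by ring)

lemma strictMonoOn_mul_exp_neg : StrictMonoOn (fun s => s * exp (-s)) (Iic 1) := by
  refine strictMonoOn_of_hasDerivWithinAt_pos (convex_Iic 1)
    (fun s _ => (hasDerivAt_mul_exp_neg s).continuousAt.continuousWithinAt)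
    (fun s _ => (hasDerivAt_mul_exp_neg s).hasDerivWithinAt) fun s hs => ?_
  rw [interior_Iic] at hs
  exact mul_pos (exp_pos _) (sub_pos.2 hs)

lemma strictAntiOn_mul_exp_neg : StrictAntiOn (fun s => s * exp (-s)) (Ici 1) := by
  refine strictAntiOn_of_hasDerivWithinAt_neg (convex_Ici 1)
    (fun s _ => (hasDerivAt_mul_exp_neg s).continuousAt.continuousWithinAt)
    (fun s _ => (hasDerivAt_mul_exp_neg s).hasDerivWithinAt) fun s hs => ?_
  rw [interior_Ici] at hs
  exact mul_neg_of_pos_of_neg (exp_pos _) (sub_neg.2 hs)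

lemma sq_lt_exp {s : ℝ} (hs : 0 ≤ s) : s ^ 2 < exp s := by
  have h : s < exp (s / 2) := by
    nlinarith [quadratic_le_exp_of_nonneg (by linarith : 0 ≤ s / 2)]
  calc s ^ 2 < exp (s / 2) ^ 2 := by gcongr
    _ = exp s := by rw [← exp_nat_mul]; ring_nf

lemma exists_sign_pattern_of_strictMonoOn_strictAntiOn {h : ℝ → ℝ} {p m q c : ℝ}
    (hh : ContinuousOn h (Icc p q)) (hpm : p ≤ m) (hmq : m ≤ q)
    (hmono : StrictMonoOn h (Icc p m)) (hanti : StrictAntiOn h (Icc m q))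
    (hp : h p < c) (hm : c < h m) (hq : h q < c) :
    ∃ t₁ t₂, p < t₁ ∧ t₁ < t₂ ∧ t₂ < q ∧ (∀ x ∈ Ioo p t₁, h x < c) ∧
      (∀ x ∈ Ioo t₁ t₂, c < h x) ∧ (∀ x ∈ Ioo t₂ q, h x < c) := by
  obtain ⟨t₁, ht₁, hc₁⟩ := intermediate_value_Ioo hpm (hh.mono (Icc_subset_Icc le_rfl hmq)) ⟨hp, hm⟩
  obtain ⟨t₂, ht₂, hc₂⟩ := intermediate_value_Ioo' hmq (hh.mono (Icc_subset_Icc hpm le_rfl))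
    ⟨hq, hm⟩
  refine ⟨t₁, t₂, ht₁.1, ht₁.2.trans ht₂.1, ht₂.2, fun x hx => ?_, fun x hx => ?_, fun x hx => ?_⟩
  · exact hc₁ ▸ hmono ⟨hx.1.le, hx.2.le.trans ht₁.2.le⟩ (Ioo_subset_Icc_self ht₁) hx.2
  · rcases le_total x m with hxm | hxm
    · exact hc₁ ▸ hmono (Ioo_subset_Icc_self ht₁) ⟨ht₁.1.le.trans hx.1.le, hxm⟩ hx.1
    · exact hc₂ ▸ hanti ⟨hxm, hx.2.le.trans ht₂.2.le⟩ (Ioo_subset_Icc_self ht₂) hx.2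
  · exact hc₂ ▸ hanti (Ioo_subset_Icc_self ht₂) ⟨ht₂.1.le.trans hx.1.le, hx.2.le⟩ hx.1

lemma exists_three_zeros_of_strictAntiOn_strictMonoOn_strictAntiOn {g : ℝ → ℝ} {p t₁ t₂ q y : ℝ}
    (hg : ContinuousOn g (Icc p q)) (hpt : p < t₁) (ht : t₁ ≤ t₂) (htq : t₂ ≤ q)
    (h₁ : StrictAntiOn g (Icc p t₁)) (h₂ : StrictMonoOn g (Icc t₁ t₂))
    (h₃ : StrictAntiOn g (Icc t₂ q)) (hgp : g p = 0) (hgq : g q < 0)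
    (hy : y ∈ Icc p q) (hgy : 0 < g y) :
    ∃ a b, p < a ∧ a < b ∧ b < q ∧ ∀ x ∈ Icc p q, g x = 0 ↔ x = p ∨ x = a ∨ x = b := by
  have hneg : ∀ x ∈ Ioc p t₁, g x < 0 := fun x hx =>
    hgp ▸ h₁ (left_mem_Icc.2 hpt.le) (Ioc_subset_Icc_self hx) hx.1
  have hgt₂ : 0 < g t₂ := by
    rcases le_or_gt y t₁ with hyt₁ | hyt₁
    · rcases hy.1.eq_or_lt with rfl | hpy
      · linarith
      · linarith [hneg y ⟨hpy, hyt₁⟩]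
    rcases le_or_gt y t₂ with hyt₂ | hyt₂
    · exact hgy.trans_le (h₂.monotoneOn ⟨hyt₁.le, hyt₂⟩ (right_mem_Icc.2 ht) hyt₂)
    · exact hgy.trans (h₃ (left_mem_Icc.2 htq) ⟨hyt₂.le, hy.2⟩ hyt₂)
  obtain ⟨a, ha, hga⟩ := intermediate_value_Ioo ht (hg.mono (Icc_subset_Icc hpt.le htq))
    ⟨hneg t₁ ⟨hpt, le_rfl⟩, hgt₂⟩
  obtain ⟨b, hb, hgb⟩ := intermediate_value_Ioo' htq
    (hg.mono (Icc_subset_Icc (hpt.le.trans ht) le_rfl)) ⟨hgq, hgt₂⟩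
  refine ⟨a, b, hpt.trans ha.1, ha.2.trans hb.1, hb.2, fun x hx => ⟨fun hgx => ?_, ?_⟩⟩
  · rcases hx.1.eq_or_lt with rfl | hpx
    · exact Or.inl rfl
    rcases le_or_gt x t₁ with hxt₁ | hxt₁
    · exact absurd hgx (hneg x ⟨hpx, hxt₁⟩).ne
    rcases le_or_gt x t₂ with hxt₂ | hxt₂
    · exact Or.inr (Or.inl (h₂.injOn ⟨hxt₁.le, hxt₂⟩ (Ioo_subset_Icc_self ha) (hgx.trans hga.symm)))
    · exact Or.inr (Or.inr (h₃.injOn ⟨hxt₂.le, hx.2⟩ (Ioo_subset_Icc_self hb) (hgx.trans hgb.symm)))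
  · rintro (rfl | rfl | rfl) <;> assumption

lemma exists_three_zeros_of_hasDerivAt {g h : ℝ → ℝ} {p m q c y : ℝ}
    (hg : ∀ x, HasDerivAt g (h x - c) x) (hh : ContinuousOn h (Icc p q)) (hpm : p ≤ m)
    (hmq : m ≤ q) (hmono : StrictMonoOn h (Icc p m)) (hanti : StrictAntiOn h (Icc m q))
    (hp : h p < c) (hm : c < h m) (hq : h q < c) (hgp : g p = 0) (hgq : g q < 0)
    (hy : y ∈ Icc p q) (hgy : 0 < g y) :
    ∃ a b, p < a ∧ a < b ∧ b < q ∧ ∀ x ∈ Icc p q, g x = 0 ↔ x = p ∨ x = a ∨ x = b := by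
  obtain ⟨t₁, t₂, hpt, ht, htq, h₁, h₂, h₃⟩ :=
    exists_sign_pattern_of_strictMonoOn_strictAntiOn hh hpm hmq hmono hanti hp hm hq
  have hgc : Continuous g := continuous_iff_continuousAt.2 fun x => (hg x).continuousAt
  have anti {a b : ℝ} (hs : ∀ x ∈ Ioo a b, h x < c) : StrictAntiOn g (Icc a b) :=
    strictAntiOn_of_hasDerivWithinAt_neg (convex_Icc a b) hgc.continuousOn
      (fun x _ => (hg x).hasDerivWithinAt)
      (fun x hx => sub_neg.2 (hs x (by rwa [interior_Icc] at hx)))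
  have mono : StrictMonoOn g (Icc t₁ t₂) :=
    strictMonoOn_of_hasDerivWithinAt_pos (convex_Icc t₁ t₂) hgc.continuousOn
      (fun x _ => (hg x).hasDerivWithinAt)
      (fun x hx => sub_pos.2 (h₂ x (by rwa [interior_Icc] at hx)))
  exact exists_three_zeros_of_strictAntiOn_strictMonoOn_strictAntiOn hgc.continuousOn hpt ht.le
    htq.le (anti h₁) mono (anti h₃) hgp hgq hy hgy

lemma exists_lt_mul_poissonGeTwo {lam : ℝ}
    (hlam : sInf ((fun x => x / (1 - exp (-x) * (1 + x))) '' Ioi (0 : ℝ)) < lam) :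
    ∃ s, 0 < s ∧ s < lam * poissonGeTwo s := by
  obtain ⟨_, ⟨s, hs, rfl⟩, hlt⟩ := exists_lt_of_csInf_lt (nonempty_Ioi.image _) hlam
  exact ⟨s, hs, (div_lt_iff₀ (poissonGeTwo_pos hs)).1 hlt⟩

lemma exp_one_lt_of_lt_mul_poissonGeTwo {lam s : ℝ} (hs : 0 < s)
    (h : s < lam * poissonGeTwo s) : exp 1 < lam := by
  have hlam : 0 < lam := pos_of_mul_pos_left (hs.trans h) (poissonGeTwo_pos hs).le
  have h' : s * 1 < s * (lam * exp (-1)) :=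
    calc s * 1 < lam * poissonGeTwo s := by rwa [mul_one]
      _ ≤ lam * (s * exp (-1)) := by gcongr; exact poissonGeTwo_le_mul_exp_neg_one hs.le
      _ = s * (lam * exp (-1)) := by ring
  have h1 := lt_of_mul_lt_mul_left h' hs.le
  rwa [exp_neg, ← div_eq_mul_inv, one_lt_div (exp_pos 1)] at h1

lemma hasDerivAt_poissonGeTwo_mul_sub (lam x : ℝ) :
    HasDerivAt (fun x => poissonGeTwo (lam * x) - x) (lam * (lam * x * exp (-(lam * x))) - 1) x :=
  (((hasDerivAt_poissonGeTwo (lam * x)).comp x ((hasDerivAt_id' x).const_mul lam)).sub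
    (hasDerivAt_id' x)).congr_deriv (by ring)

lemma strictMonoOn_mul_mul_exp_neg_mul {lam : ℝ} (hlam : 0 < lam) :
    StrictMonoOn (fun x => lam * (lam * x * exp (-(lam * x)))) (Iic lam⁻¹) := by
  have hmaps {z : ℝ} (hz : z ≤ lam⁻¹) : lam * z ∈ Iic 1 :=
    (mul_le_mul_of_nonneg_left hz hlam.le).trans_eq (mul_inv_cancel₀ hlam.ne')
  exact fun x hx y hy hxy => mul_lt_mul_of_pos_left
    (strictMonoOn_mul_exp_neg (hmaps hx) (hmaps hy) (mul_lt_mul_of_pos_left hxy hlam)) hlam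

lemma strictAntiOn_mul_mul_exp_neg_mul {lam : ℝ} (hlam : 0 < lam) :
    StrictAntiOn (fun x => lam * (lam * x * exp (-(lam * x)))) (Ici lam⁻¹) := by
  have hmaps {z : ℝ} (hz : lam⁻¹ ≤ z) : lam * z ∈ Ici 1 :=
    (mul_inv_cancel₀ hlam.ne').symm.trans_le (mul_le_mul_of_nonneg_left hz hlam.le)
  exact fun x hx y hy hxy => mul_lt_mul_of_pos_left
    (strictAntiOn_mul_exp_neg (hmaps hx) (hmaps hy) (mul_lt_mul_of_pos_left hxy hlam)) hlam

/-- Let `λ_crit = inf_{x>0} x / (1 - e^{-x}(1+x))`. If `λ > λ_crit`, then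
the equation `1 - e^{-λx}(1 + λx) = x` has exactly three solutions in `[0,1]`: `x = 0`
and two further solutions `a < b`, both in the open interval `(0,1)`. -/
theorem stmt_9 (lam : ℝ)
    (hlam : sInf ((fun x => x / (1 - Real.exp (-x) * (1 + x))) '' Set.Ioi (0 : ℝ)) < lam) :
    ∃ a b : ℝ, 0 < a ∧ a < b ∧ b < 1 ∧
      ∀ x ∈ Set.Icc (0 : ℝ) 1,
        (1 - Real.exp (-(lam * x)) * (1 + lam * x) = x ↔ x = 0 ∨ x = a ∨ x = b) := by
  obtain ⟨s, hs, hslam⟩ := exists_lt_mul_poissonGeTwo hlam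
  have hlamE : exp 1 < lam := exp_one_lt_of_lt_mul_poissonGeTwo hs hslam
  have hlam0 : 0 < lam := (exp_pos 1).trans hlamE
  have hslt : s < lam :=
    hslam.trans (mul_lt_of_lt_one_right hlam0 (poissonGeTwo_lt_one (by linarith)))
  have hpeak : 1 < lam * (lam * lam⁻¹ * exp (-(lam * lam⁻¹))) := by
    rwa [mul_inv_cancel₀ hlam0.ne', one_mul, exp_neg, ← div_eq_mul_inv, one_lt_div (exp_pos 1)]
  have hend : lam * (lam * 1 * exp (-(lam * 1))) < 1 := by
    rw [mul_one, ← mul_assoc, ← sq, exp_neg, ← div_eq_mul_inv, div_lt_one (exp_pos _)]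
    exact sq_lt_exp hlam0.le
  have hgy : 0 < poissonGeTwo (lam * (s / lam)) - s / lam := by
    rwa [mul_div_cancel₀ s hlam0.ne', sub_pos, div_lt_iff₀' hlam0]
  obtain ⟨a, b, ha, hab, hb, hzero⟩ := exists_three_zeros_of_hasDerivAt
    (hasDerivAt_poissonGeTwo_mul_sub lam) (by fun_prop) (inv_nonneg.2 hlam0.le)
    (inv_le_one_of_one_le₀ (by linarith [add_one_le_exp 1]))
    ((strictMonoOn_mul_mul_exp_neg_mul hlam0).mono Icc_subset_Iic_self)
    ((strictAntiOn_mul_mul_exp_neg_mul hlam0).mono Icc_subset_Ici_self) (by simp) hpeak hend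
    (by simp [poissonGeTwo_zero]) (by simpa using poissonGeTwo_lt_one (by linarith : -1 < lam))
    ⟨div_nonneg hs.le hlam0.le, (div_le_one hlam0).2 hslt.le⟩ hgy
  exact ⟨a, b, ha, hab, hb, fun x hx => sub_eq_zero.symm.trans (hzero x hx)⟩
end

section
/- Let λ_crit = inf_{x>0} x / (1 − e^{−x}(1 + x)), let λ > λ_crit, let Ψ_λ(x) = 1 − e^{−λx}(1 + λx), and let a < b be the two solutions of Ψ_λ(x) = x in (0,1). Then the derivative of Ψ_λ at the middle fixed point a satisfies Ψ_λ'(a) = λ² a e^{−λa} > 1. -/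
/-!
Since `Ψ(0) = 0`, `Ψ(a) = a` and `Ψ(b) = b`, Rolle's theorem applied to `Ψ(x) - x` gives points
`c ∈ (0, a)` and `d ∈ (a, b)` with `Ψ'(c) = Ψ'(d) = 1`. The derivative `Ψ'(x) = λ² x e^{-λx}` is
strictly log-concave on `(0, ∞)`, so it is strictly larger than `1` between `c` and `d`,
in particular at `a`.
-/

open Real Set

theorem exists_hasDerivAt_eq_one_of_map_eq_self {f f' : ℝ → ℝ} {p q : ℝ} (hpq : p < q)
    (hf : ContinuousOn f (Icc p q)) (hf' : ∀ x ∈ Ioo p q, HasDerivAt f (f' x) x)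
    (hp : f p = p) (hq : f q = q) : ∃ c ∈ Ioo p q, f' c = 1 := by
  obtain ⟨c, hc, hc0⟩ := exists_hasDerivAt_eq_zero (f := fun x => f x - x) hpq
    (hf.sub continuousOn_id) (by simp [hp, hq]) fun x hx => (hf' x hx).sub (hasDerivAt_id x)
  exact ⟨c, hc, sub_eq_zero.mp hc0⟩

section

variable (lam : ℝ)

theorem hasDerivAt_one_sub_exp_mul_one_add (x : ℝ) :
    HasDerivAt (fun y => 1 - exp (-(lam * y)) * (1 + lam * y))
      (lam ^ 2 * x * exp (-(lam * x))) x := by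
  have hlin : HasDerivAt (fun y => lam * y) lam x := by
    simpa using (hasDerivAt_id x).const_mul lam
  exact ((hlin.fun_neg.exp.fun_mul (hlin.const_add 1)).const_sub 1).congr_deriv (by ring)

theorem strictConcaveOn_log_sq_mul_mul_exp (hlam : lam ≠ 0) :
    StrictConcaveOn ℝ (Ioi 0) (fun x => log (lam ^ 2 * x * exp (-(lam * x)))) := by
  refine ((strictConcaveOn_log_Ioi.sub_convexOn
    ((LinearMap.mulLeft ℝ lam).convexOn (convex_Ioi 0))).add_const (log (lam ^ 2))).congr ?_
  intro x (hx : 0 < x)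
  simp only [Pi.add_apply, Pi.sub_apply, LinearMap.mulLeft_apply]
  rw [log_mul (by positivity) (exp_pos _).ne', log_mul (by positivity) hx.ne', log_exp]
  ring

theorem one_lt_sq_mul_mul_exp_of_mem_Ioo {a c d : ℝ} (hc : 0 < c) (ha : a ∈ Ioo c d)
    (hgc : lam ^ 2 * c * exp (-(lam * c)) = 1) (hgd : lam ^ 2 * d * exp (-(lam * d)) = 1) :
    1 < lam ^ 2 * a * exp (-(lam * a)) := by
  have hlam : lam ≠ 0 := by rintro rfl; simp at hgc
  have hd : 0 < d := hc.trans (ha.1.trans ha.2)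
  have hlog := (strictConcaveOn_log_sq_mul_mul_exp lam hlam).lt_on_openSegment
    (mem_Ioi.mpr hc) (mem_Ioi.mpr hd) (ha.1.trans ha.2).ne
    (Ioo_subset_openSegment ha)
  simp only [hgc, hgd, log_one, min_self] at hlog
  have ha0 : 0 < a := hc.trans ha.1
  exact (log_pos_iff (by positivity)).mp hlog

end

theorem stmt_10_general (lam a b : ℝ)
    (ha : a ∈ Set.Ioo (0 : ℝ) 1) (hab : a < b)
    (hfa : 1 - Real.exp (-(lam * a)) * (1 + lam * a) = a)
    (hfb : 1 - Real.exp (-(lam * b)) * (1 + lam * b) = b) :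
    HasDerivAt (fun x => 1 - Real.exp (-(lam * x)) * (1 + lam * x))
      (lam ^ 2 * a * Real.exp (-(lam * a))) a ∧
    1 < lam ^ 2 * a * Real.exp (-(lam * a)) := by
  have hderiv := hasDerivAt_one_sub_exp_mul_one_add lam
  have hcont : Continuous fun x => 1 - exp (-(lam * x)) * (1 + lam * x) :=
    continuous_iff_continuousAt.mpr fun x => (hderiv x).continuousAt
  obtain ⟨c, hc, hgc⟩ := exists_hasDerivAt_eq_one_of_map_eq_self ha.1 hcont.continuousOn
    (fun x _ => hderiv x) (by simp) hfa
  obtain ⟨d, hd, hgd⟩ := exists_hasDerivAt_eq_one_of_map_eq_self hab hcont.continuousOn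
    (fun x _ => hderiv x) hfa hfb
  exact ⟨hderiv a, one_lt_sq_mul_mul_exp_of_mem_Ioo lam hc.1 ⟨hc.2, hd.1⟩ hgc hgd⟩

/-- Let `λ_crit = inf_{x>0} x / (1 - e^{-x}(1+x))`, let `λ > λ_crit`,
let `Ψ_λ(x) = 1 - e^{-λx}(1 + λx)`, and let `a < b` be the two fixed points of `Ψ_λ`
in `(0,1)`. Then `Ψ_λ'(a) = λ² a e^{-λa} > 1`. -/
theorem stmt_10 (lam a b : ℝ)
    (hlam : sInf ((fun x => x / (1 - Real.exp (-x) * (1 + x))) '' Set.Ioi (0 : ℝ)) < lam)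
    (ha : a ∈ Set.Ioo (0 : ℝ) 1) (hb : b ∈ Set.Ioo (0 : ℝ) 1) (hab : a < b)
    (hfa : 1 - Real.exp (-(lam * a)) * (1 + lam * a) = a)
    (hfb : 1 - Real.exp (-(lam * b)) * (1 + lam * b) = b) :
    HasDerivAt (fun x => 1 - Real.exp (-(lam * x)) * (1 + lam * x))
      (lam ^ 2 * a * Real.exp (-(lam * a))) a ∧
    1 < lam ^ 2 * a * Real.exp (-(lam * a)) :=
  stmt_10_general lam a b ha hab hfa hfb
end

section
/- Let λ > 0 and let x ∈ (0,1) satisfy x = e^{−λx}. Then λ·e^{−λx} > 1 if and only if λ > e (equivalently, λ·e^{−λx} ≤ 1 if and only if λ ≤ e). -/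
/-! Writing `t = λx`, the fixed-point equation gives `x = e^{-t}`, hence `λ e^{-λx} = λx = t` and
`λ = t e^t`. Since `t ↦ t e^t` is increasing where it is positive and takes the value `e` at `t = 1`,
`t > 1` is equivalent to `λ = t e^t > e`. -/

open Real

theorem one_lt_iff_exp_one_lt_mul_exp (t : ℝ) : 1 < t ↔ exp 1 < t * exp t := by
  constructor
  · intro ht
    calc exp 1 = 1 * exp 1 := (one_mul _).symm
      _ < t * exp t := mul_lt_mul ht (exp_le_exp.2 ht.le) (exp_pos 1) (zero_le_one.trans ht.le)
  · intro h
    by_contra! ht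
    rcases le_or_gt t 0 with ht0 | ht0
    · linarith [mul_nonpos_of_nonpos_of_nonneg ht0 (exp_pos t).le, exp_pos 1]
    · have : t * exp t ≤ 1 * exp 1 := mul_le_mul ht (exp_le_exp.2 ht) (exp_pos t).le zero_le_one
      linarith

theorem mul_mul_exp_eq_of_eq_exp_neg_mul {lam x : ℝ} (hfix : x = exp (-(lam * x))) :
    lam * x * exp (lam * x) = lam := by
  have hx : x * exp (lam * x) = 1 := by
    nth_rewrite 1 [hfix]
    rw [← exp_add, neg_add_cancel, exp_zero]
  rw [mul_assoc, hx, mul_one]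

theorem stmt_14_general (lam x : ℝ)
    (hfix : x = Real.exp (-(lam * x))) :
    (1 < lam * Real.exp (-(lam * x)) ↔ Real.exp 1 < lam) ∧
    (lam * Real.exp (-(lam * x)) ≤ 1 ↔ lam ≤ Real.exp 1) := by
  have key := one_lt_iff_exp_one_lt_mul_exp (lam * x)
  rw [mul_mul_exp_eq_of_eq_exp_neg_mul hfix] at key
  rw [← hfix]
  exact ⟨key, by simpa only [not_lt] using key.not⟩

/-- Let `λ > 0` and `x ∈ (0,1)` with `x = e^{-λx}`. Then
`λ e^{-λx} > 1 ↔ λ > e`, and equivalently `λ e^{-λx} ≤ 1 ↔ λ ≤ e`. -/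
theorem stmt_14 (lam x : ℝ) (hlam : 0 < lam) (hx : x ∈ Set.Ioo (0 : ℝ) 1)
    (hfix : x = Real.exp (-(lam * x))) :
    (1 < lam * Real.exp (-(lam * x)) ↔ Real.exp 1 < lam) ∧
    (lam * Real.exp (-(lam * x)) ≤ 1 ↔ lam ≤ Real.exp 1) :=
  stmt_14_general lam x hfix
end

section
/- For λ > 0 let Ψ_λ(x) = 1 − e^{−λ(1−x)} − e^{−λx} + e^{−λ}. (i) If λ(1 − e^{−λ}) ≤ 1, then x = 0 is the only solution of Ψ_λ(x) = x in [0,1]. (ii) If λ(1 − e^{−λ}) > 1, then Ψ_λ(x) = x has exactly two solutions in [0,1]: x = 0 and one further solution lying in the open interval (0,1). -/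
/-!
The fixed points of `Ψ_λ` are the zeros of `g = Ψ_λ - id`, which is strictly concave (its
derivative `λ e^{-λx} - λ e^{-λ(1-x)} - 1` is strictly decreasing), with `g 0 = 0`, `g 1 = -1`
and `g'(0) = λ(1 - e^{-λ}) - 1`. A strictly concave function vanishing at `0` has at most one
further zero to the right of `0`. If `g'(0) ≤ 0`, concavity puts `g` strictly below its tangent
at `0`, so `g < 0` on `(0, 1]`. If `g'(0) > 0`, then `g` is positive just to the right of `0` and
`g 1 < 0`, so the intermediate value theorem provides the second zero.
-/

open Real Set Filter Topology

section StrictConcave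

variable {f : ℝ → ℝ} {s : Set ℝ} {a b x y f' : ℝ}

theorem HasDerivAt.exists_mem_Ioo_lt_apply (hf : HasDerivAt f f' a) (hf' : 0 < f') (hab : a < b) :
    ∃ c ∈ Ioo a b, f a < f c := by
  have hslope : ∀ᶠ c in 𝓝[>] a, 0 < slope f a c :=
    ((hasDerivAt_iff_tendsto_slope.1 hf).mono_left (nhdsGT_le_nhdsNE a)).eventually
      (lt_mem_nhds hf')
  obtain ⟨c, hc, hpos⟩ := ((eventually_mem_set.2 (Ioo_mem_nhdsGT hab)).and hslope).exists
  rw [slope_def_field, div_pos_iff_of_pos_right (sub_pos.2 hc.1)] at hpos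
  exact ⟨c, hc, sub_pos.1 hpos⟩

theorem StrictConcaveOn.apply_lt_of_hasDerivAt_nonpos (hf : StrictConcaveOn ℝ s f) (ha : a ∈ s)
    (hx : x ∈ s) (hax : a < x) (hfa : HasDerivAt f f' a) (hf' : f' ≤ 0) : f x < f a := by
  have hslope := (hf.slope_lt_of_hasDerivAt ha hx hax hfa).trans_le hf'
  rw [slope_def_field, div_lt_iff₀ (sub_pos.2 hax), zero_mul] at hslope
  linarith

theorem StrictConcaveOn.eq_of_apply_eq (hf : StrictConcaveOn ℝ s f) (ha : a ∈ s) (hx : x ∈ s)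
    (hy : y ∈ s) (hax : a < x) (hay : a < y) (hfx : f x = f a) (hfy : f y = f a) : x = y := by
  have key : ∀ {u v}, u ∈ s → v ∈ s → a < u → u < v → f u = f a → f v = f a → False := by
    intro u v hu hv hau huv hfu hfv
    have := hf.slope_anti_adjacent ha hv hau huv
    rw [hfu, hfv, sub_self, zero_div, zero_div] at this
    exact lt_irrefl 0 this
  rcases lt_trichotomy x y with hxy | hxy | hxy
  · exact (key hx hy hax hxy hfx hfy).elim
  · exact hxy
  · exact (key hy hx hay hxy hfy hfx).elim

end StrictConcave

noncomputable def psiSubId (lam x : ℝ) : ℝ :=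
  1 - exp (-(lam * (1 - x))) - exp (-(lam * x)) + exp (-lam) - x

theorem hasDerivAt_psiSubId (lam x : ℝ) :
    HasDerivAt (psiSubId lam) (lam * exp (-(lam * x)) - lam * exp (-(lam * (1 - x))) - 1) x := by
  have hu : HasDerivAt (fun y ↦ -(lam * (1 - y))) lam x := by
    simpa [Pi.neg_def] using (((hasDerivAt_const x 1).sub (hasDerivAt_id x)).const_mul lam).neg
  have hv : HasDerivAt (fun y ↦ -(lam * y)) (-lam) x := by
    simpa [Pi.neg_def] using ((hasDerivAt_id x).const_mul lam).neg
  exact ((((((hasDerivAt_const x 1).sub hu.exp).sub hv.exp).add_const (exp (-lam))).sub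
    (hasDerivAt_id x)).congr_deriv (by ring))

theorem hasDerivAt_psiSubId_zero (lam : ℝ) :
    HasDerivAt (psiSubId lam) (lam * (1 - exp (-lam)) - 1) 0 := by
  convert hasDerivAt_psiSubId lam 0 using 1
  simp only [mul_zero, neg_zero, exp_zero, sub_zero, mul_one]
  ring

theorem psiSubId_zero (lam : ℝ) : psiSubId lam 0 = 0 := by
  simp [psiSubId]

theorem psiSubId_one (lam : ℝ) : psiSubId lam 1 = -1 := by
  simp [psiSubId]

theorem continuous_psiSubId (lam : ℝ) : Continuous (psiSubId lam) := by
  unfold psiSubId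
  fun_prop

theorem strictConcaveOn_psiSubId {lam : ℝ} (hlam : 0 < lam) :
    StrictConcaveOn ℝ univ (psiSubId lam) := by
  refine StrictAnti.strictConcaveOn_univ_of_deriv (continuous_psiSubId lam) ?_
  intro x y hxy
  rw [(hasDerivAt_psiSubId lam x).deriv, (hasDerivAt_psiSubId lam y).deriv]
  have h₁ : exp (-(lam * y)) < exp (-(lam * x)) := exp_lt_exp.2 (by nlinarith)
  have h₂ : exp (-(lam * (1 - x))) < exp (-(lam * (1 - y))) := exp_lt_exp.2 (by nlinarith)
  nlinarith

/-- For `λ > 0` let `Ψ_λ(x) = 1 - e^{-λ(1-x)} - e^{-λx} + e^{-λ}`.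
(i) If `λ(1 - e^{-λ}) ≤ 1`, then `x = 0` is the only solution of `Ψ_λ(x) = x` in `[0,1]`.
(ii) If `λ(1 - e^{-λ}) > 1`, then `Ψ_λ(x) = x` has exactly two solutions in `[0,1]`:
`x = 0` and one further solution in `(0,1)`. -/
theorem stmt_15 (lam : ℝ) (hlam : 0 < lam) :
    (lam * (1 - Real.exp (-lam)) ≤ 1 →
      ∀ x ∈ Set.Icc (0 : ℝ) 1,
        1 - Real.exp (-(lam * (1 - x))) - Real.exp (-(lam * x)) + Real.exp (-lam) = x →
          x = 0) ∧
    (1 < lam * (1 - Real.exp (-lam)) →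
      ∃ q ∈ Set.Ioo (0 : ℝ) 1, ∀ x ∈ Set.Icc (0 : ℝ) 1,
        (1 - Real.exp (-(lam * (1 - x))) - Real.exp (-(lam * x)) + Real.exp (-lam) = x ↔
          x = 0 ∨ x = q)) := by
  have hconc := strictConcaveOn_psiSubId hlam
  refine ⟨fun hle x hx hfix ↦ ?_, fun hgt ↦ ?_⟩
  · by_contra hx0
    have hlt := hconc.apply_lt_of_hasDerivAt_nonpos (mem_univ 0) (mem_univ x)
      (hx.1.lt_of_ne' hx0) (hasDerivAt_psiSubId_zero lam) (by linarith)
    rw [psiSubId_zero, psiSubId, hfix, sub_self] at hlt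
    exact lt_irrefl 0 hlt
  obtain ⟨c, hc, hgc⟩ :=
    (hasDerivAt_psiSubId_zero lam).exists_mem_Ioo_lt_apply (by linarith) zero_lt_one
  rw [psiSubId_zero] at hgc
  obtain ⟨q, hq, hgq⟩ := intermediate_value_Ioo' hc.2.le (continuous_psiSubId lam).continuousOn
    ⟨by rw [psiSubId_one]; norm_num, hgc⟩
  refine ⟨q, ⟨hc.1.trans hq.1, hq.2⟩, fun x hx ↦ ?_⟩
  rw [← sub_eq_zero]
  change psiSubId lam x = 0 ↔ _
  constructor
  · intro hgx
    rcases hx.1.eq_or_lt with hx0 | hx0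
    · exact .inl hx0.symm
    · rw [← psiSubId_zero lam] at hgx hgq
      exact .inr (hconc.eq_of_apply_eq (mem_univ 0) (mem_univ x) (mem_univ q) hx0
        (hc.1.trans hq.1) hgx hgq)
  · rintro (rfl | rfl)
    exacts [psiSubId_zero lam, hgq]
end

section
/- Let A : ℕ × ℕ → {0,1} be a monotone two-colour tree automaton, i.e. A(n₀ + 1, n₁) ≤ A(n₀, n₁ + 1) for all n₀, n₁, and let χ be a probability mass function on ℕ with finite mean ∑_k k·χ(k) < ∞. Define the automaton distribution map Ψ : [0,1] → [0,1] by Ψ(x) = ∑_{k≥0} χ(k) ∑_{j=0}^{k} C(k,j) x^j (1−x)^{k−j} A(k−j, j), and define the expected number of pivotal children at parameter x by Π(x) = ∑_{k≥0} χ(k) ∑_{j=0}^{k} C(k,j) x^j (1−x)^{k−j} · [ j·1{A(k−j, j) ≠ A(k−j+1, j−1)} + (k−j)·1{A(k−j, j) ≠ A(k−j−1, j+1)} ]. Then Ψ is differentiable on (0,1) and Ψ'(x) = Π(x) for every x ∈ (0,1). -/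
/-!
With `k` children, the number of colour-1 children is binomial `Bin(k, x)`, and the parent's
colour `b j := A (k - j) j` is nondecreasing in `j` by monotonicity of `A`, so a pivotal child
is exactly a unit step of `b`:
`Π_k(x) = ∑ j P(Bin(k,x) = j) (j (b j - b (j-1)) + (k-j) (b (j+1) - b j))`.
Differentiating the binomial weights shows that `Ψ_k'(x)` and `Π_k(x)` both equal
`∑_{i<k} k P(Bin(k-1,x) = i) (b (i+1) - b i)`. Since `|Π_k| ≤ k` and `χ` has a finite first
moment, the series over `k` may be differentiated term by term.
-/

/-- The automaton distribution map `Ψ` of a two-colour tree automaton `A` with child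
distribution `χ`: the probability that the parent gets colour 1 when the number of
children is sampled from `χ` and each child is independently coloured 1 with
probability `x`. Here `A n₀ n₁` is the parent colour for `n₀` children of colour 0
and `n₁` children of colour 1. -/
noncomputable def autoPsi (A : ℕ → ℕ → Bool) (χ : ℕ → ℝ) (x : ℝ) : ℝ :=
  ∑' k : ℕ, χ k * ∑ j ∈ Finset.range (k + 1),
    (k.choose j : ℝ) * x ^ j * (1 - x) ^ (k - j) * (if A (k - j) j then 1 else 0)

/-- The expected number of pivotal children at parameter `x`: a colour-1 child is
pivotal if switching it to colour 0 changes the parent's colour, and symmetrically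
for colour-0 children. -/
noncomputable def autoPivMean (A : ℕ → ℕ → Bool) (χ : ℕ → ℝ) (x : ℝ) : ℝ :=
  ∑' k : ℕ, χ k * ∑ j ∈ Finset.range (k + 1),
    (k.choose j : ℝ) * x ^ j * (1 - x) ^ (k - j) *
      ((j : ℝ) * (if A (k - j) j ≠ A (k - j + 1) (j - 1) then 1 else 0) +
        ((k - j : ℕ) : ℝ) * (if A (k - j) j ≠ A (k - j - 1) (j + 1) then 1 else 0))

open Finset

noncomputable def binomWeight (k j : ℕ) (x : ℝ) : ℝ :=
  (k.choose j : ℝ) * x ^ j * (1 - x) ^ (k - j)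

-- `k * binomWeight (k - 1) i x`, the rate at which `P(Bin(k, x) ≤ i)` decreases in `x`.
noncomputable def binomFlux (k i : ℕ) (x : ℝ) : ℝ :=
  (k.choose i : ℝ) * (k - i : ℕ) * x ^ i * (1 - x) ^ (k - i - 1)

lemma binomWeight_nonneg {k : ℕ} {x : ℝ} (hx : x ∈ Set.Icc (0 : ℝ) 1) (j : ℕ) :
    0 ≤ binomWeight k j x :=
  mul_nonneg (mul_nonneg (Nat.cast_nonneg _) (pow_nonneg hx.1 _)) (pow_nonneg (sub_nonneg.2 hx.2) _)

lemma sum_binomWeight (k : ℕ) (x : ℝ) : ∑ j ∈ range (k + 1), binomWeight k j x = 1 := by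
  have h := add_pow x (1 - x) k
  rw [add_sub_cancel, one_pow] at h
  rw [h]
  exact sum_congr rfl fun j _ => by rw [binomWeight]; ring

lemma abs_sum_binomWeight_mul_le {k : ℕ} {x : ℝ} (hx : x ∈ Set.Icc (0 : ℝ) 1)
    {b : ℕ → ℝ} {M : ℝ} (hb : ∀ j ≤ k, |b j| ≤ M) :
    |∑ j ∈ range (k + 1), binomWeight k j x * b j| ≤ M :=
  calc |∑ j ∈ range (k + 1), binomWeight k j x * b j|
      ≤ ∑ j ∈ range (k + 1), binomWeight k j x * |b j| := by
        refine (abs_sum_le_sum_abs _ _).trans_eq (sum_congr rfl fun j _ => ?_)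
        rw [abs_mul, abs_of_nonneg (binomWeight_nonneg hx j)]
    _ ≤ ∑ j ∈ range (k + 1), binomWeight k j x * M :=
        sum_le_sum fun j hj => mul_le_mul_of_nonneg_left
          (hb j (Nat.lt_succ_iff.mp (mem_range.mp hj))) (binomWeight_nonneg hx j)
    _ = M := by rw [← sum_mul, sum_binomWeight, one_mul]

lemma binomFlux_self (k : ℕ) (x : ℝ) : binomFlux k k x = 0 := by
  simp [binomFlux]

lemma succ_mul_binomWeight_succ (k j : ℕ) (x : ℝ) :
    ((j + 1 : ℕ) : ℝ) * binomWeight k (j + 1) x = x * binomFlux k j x := by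
  have h := congrArg (Nat.cast (R := ℝ)) (Nat.choose_succ_right_eq k j)
  push_cast at h ⊢
  rw [binomWeight, binomFlux, show k - (j + 1) = k - j - 1 by omega]
  linear_combination (x ^ (j + 1) * (1 - x) ^ (k - j - 1)) * h

lemma natCast_sub_mul_binomWeight (k j : ℕ) (x : ℝ) :
    ((k - j : ℕ) : ℝ) * binomWeight k j x = (1 - x) * binomFlux k j x := by
  rcases Nat.lt_or_ge j k with hj | hj
  · obtain ⟨m, hm⟩ : ∃ m, k - j = m + 1 := ⟨k - j - 1, by omega⟩
    rw [binomWeight, binomFlux, hm, Nat.add_sub_cancel]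
    ring
  · simp [binomFlux, Nat.sub_eq_zero_of_le hj]

lemma hasDerivAt_binomWeight (k j : ℕ) (x : ℝ) :
    HasDerivAt (binomWeight k j) ((k.choose j : ℝ) *
      (j * x ^ (j - 1) * (1 - x) ^ (k - j) - (k - j : ℕ) * x ^ j * (1 - x) ^ (k - j - 1))) x :=
  (((hasDerivAt_pow j x).const_mul _).mul (((hasDerivAt_id x).const_sub 1).fun_pow _)).congr_deriv
    (by simp only [id]; ring)

lemma hasDerivAt_binomWeight_zero (k : ℕ) (x : ℝ) :
    HasDerivAt (binomWeight k 0) (-binomFlux k 0 x) x :=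
  (hasDerivAt_binomWeight k 0 x).congr_deriv (by simp [binomFlux])

lemma hasDerivAt_binomWeight_succ (k j : ℕ) (x : ℝ) :
    HasDerivAt (binomWeight k (j + 1)) (binomFlux k j x - binomFlux k (j + 1) x) x := by
  refine (hasDerivAt_binomWeight k (j + 1) x).congr_deriv ?_
  have h := congrArg (Nat.cast (R := ℝ)) (Nat.choose_succ_right_eq k j)
  push_cast at h ⊢
  rw [binomFlux, binomFlux, show k - (j + 1) = k - j - 1 by omega]
  linear_combination (x ^ j * (1 - x) ^ (k - j - 1)) * h

lemma hasDerivAt_sum_binomWeight_mul (k : ℕ) (b : ℕ → ℝ) (x : ℝ) :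
    HasDerivAt (fun y => ∑ j ∈ range (k + 1), binomWeight k j y * b j)
      (∑ i ∈ range k, binomFlux k i x * (b (i + 1) - b i)) x := by
  have hsplit : (fun y => ∑ j ∈ range (k + 1), binomWeight k j y * b j) =
      fun y => ∑ i ∈ range k, binomWeight k (i + 1) y * b (i + 1) + binomWeight k 0 y * b 0 :=
    funext fun y => sum_range_succ' _ k
  rw [hsplit]
  refine ((HasDerivAt.fun_sum (u := range k) fun i _ =>
    (hasDerivAt_binomWeight_succ k i x).mul_const (b (i + 1))).fun_add
    ((hasDerivAt_binomWeight_zero k x).mul_const (b 0))).congr_deriv ?_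
  have hshift := sum_range_succ' (fun i => binomFlux k i x * b i) k
  rw [sum_range_succ, binomFlux_self, zero_mul, add_zero] at hshift
  simp only [sub_mul, mul_sub, sum_sub_distrib]
  linear_combination hshift

lemma sum_binomWeight_mul_pivot (k : ℕ) (b : ℕ → ℝ) (x : ℝ) :
    ∑ j ∈ range (k + 1), binomWeight k j x *
        (j * (b j - b (j - 1)) + ((k - j : ℕ) : ℝ) * (b (j + 1) - b j)) =
      ∑ i ∈ range k, binomFlux k i x * (b (i + 1) - b i) := by
  have hup : ∑ j ∈ range (k + 1), binomWeight k j x * (j * (b j - b (j - 1))) =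
      x * ∑ i ∈ range k, binomFlux k i x * (b (i + 1) - b i) := by
    rw [sum_range_succ', mul_sum]
    simp only [Nat.cast_zero, zero_mul, mul_zero, add_zero, Nat.add_sub_cancel]
    refine sum_congr rfl fun i _ => ?_
    linear_combination (b (i + 1) - b i) * succ_mul_binomWeight_succ k i x
  have hdown : ∑ j ∈ range (k + 1), binomWeight k j x * (((k - j : ℕ) : ℝ) * (b (j + 1) - b j)) =
      (1 - x) * ∑ i ∈ range k, binomFlux k i x * (b (i + 1) - b i) := by
    rw [sum_range_succ, mul_sum]
    simp only [Nat.sub_self, Nat.cast_zero, zero_mul, mul_zero, add_zero]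
    refine sum_congr rfl fun i _ => ?_
    linear_combination (b (i + 1) - b i) * natCast_sub_mul_binomWeight k i x
  simp only [mul_add, sum_add_distrib, hup, hdown]
  ring

-- `autoPsi` and `autoPivMean` are, definitionally, `∑' k, χ k * ∑ j ≤ k, binomWeight k j x * c j`
-- with `c = colourInd A k` and `c = pivotCount A k` respectively.
noncomputable def colourInd (A : ℕ → ℕ → Bool) (k j : ℕ) : ℝ :=
  if A (k - j) j then 1 else 0

noncomputable def pivotCount (A : ℕ → ℕ → Bool) (k j : ℕ) : ℝ :=
  (j : ℝ) * (if A (k - j) j ≠ A (k - j + 1) (j - 1) then 1 else 0) +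
    ((k - j : ℕ) : ℝ) * (if A (k - j) j ≠ A (k - j - 1) (j + 1) then 1 else 0)

section Automaton

variable {A : ℕ → ℕ → Bool} {k j : ℕ}

lemma abs_colourInd_le : |colourInd A k j| ≤ 1 := by
  unfold colourInd; split <;> simp

lemma abs_pivotCount_le (hj : j ≤ k) : |pivotCount A k j| ≤ k := by
  unfold pivotCount
  rw [abs_of_nonneg (by positivity)]
  calc _ ≤ (j : ℝ) * 1 + ((k - j : ℕ) : ℝ) * 1 := by gcongr <;> split_ifs <;> norm_num
    _ = k := by rw [Nat.cast_sub hj]; ring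

lemma ite_ne_eq_sub {p q : Bool} (h : p ≤ q) :
    (if p ≠ q then (1 : ℝ) else 0) = (if q then 1 else 0) - (if p then 1 else 0) := by
  cases p <;> cases q <;> first | exact absurd h (by decide) | simp

lemma colour_le_colour_succ (hA : ∀ n₀ n₁, A (n₀ + 1) n₁ ≤ A n₀ (n₁ + 1)) (hj : j < k) :
    A (k - j) j ≤ A (k - (j + 1)) (j + 1) := by
  simpa only [show k - (j + 1) + 1 = k - j by omega] using hA (k - (j + 1)) j

lemma pivotCount_eq (hA : ∀ n₀ n₁, A (n₀ + 1) n₁ ≤ A n₀ (n₁ + 1)) (hj : j ≤ k) :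
    pivotCount A k j = j * (colourInd A k j - colourInd A k (j - 1)) +
      ((k - j : ℕ) : ℝ) * (colourInd A k (j + 1) - colourInd A k j) := by
  unfold pivotCount colourInd
  congr 1
  · rcases j with _ | i
    · simp
    simp only [show k - (i + 1) + 1 = k - i by omega, Nat.add_sub_cancel,
      ne_comm (a := A (k - (i + 1)) (i + 1))]
    rw [ite_ne_eq_sub (colour_le_colour_succ hA (by omega))]
  · rcases hj.lt_or_eq with hj | rfl
    · rw [show k - j - 1 = k - (j + 1) by omega, ite_ne_eq_sub (colour_le_colour_succ hA hj)]
    · simp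

end Automaton

lemma hasDerivAt_sum_binomWeight_mul_colourInd {A : ℕ → ℕ → Bool}
    (hA : ∀ n₀ n₁, A (n₀ + 1) n₁ ≤ A n₀ (n₁ + 1)) (k : ℕ) (x : ℝ) :
    HasDerivAt (fun y => ∑ j ∈ range (k + 1), binomWeight k j y * colourInd A k j)
      (∑ j ∈ range (k + 1), binomWeight k j x * pivotCount A k j) x := by
  rw [sum_congr rfl fun j hj => by
    rw [pivotCount_eq hA (Nat.lt_succ_iff.mp (mem_range.mp hj))], sum_binomWeight_mul_pivot]
  exact hasDerivAt_sum_binomWeight_mul k _ x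

lemma summable_abs_of_summable_natCast_mul {f : ℕ → ℝ}
    (h : Summable fun k : ℕ => (k : ℝ) * f k) : Summable fun k => |f k| := by
  refine h.abs.of_norm_bounded_eventually_nat (Filter.eventually_atTop.mpr ⟨1, fun k hk => ?_⟩)
  rw [Real.norm_eq_abs, abs_abs, abs_mul, Nat.abs_cast]
  exact le_mul_of_one_le_left (abs_nonneg _) (by exact_mod_cast hk)

theorem stmt_19_general (A : ℕ → ℕ → Bool) (hA : ∀ n₀ n₁, A (n₀ + 1) n₁ ≤ A n₀ (n₁ + 1))
    (χ : ℕ → ℝ) (hmean : Summable fun k : ℕ => (k : ℝ) * χ k) :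
    ∀ x ∈ Set.Ioo (0 : ℝ) 1, HasDerivAt (autoPsi A χ) (autoPivMean A χ x) x := by
  intro x hx
  refine hasDerivAt_tsum_of_isPreconnected hmean.abs isOpen_Ioo isPreconnected_Ioo
    (fun k y _ => (hasDerivAt_sum_binomWeight_mul_colourInd hA k y).const_mul (χ k))
    (fun k y hy => ?_) hx ((summable_abs_of_summable_natCast_mul hmean).of_norm_bounded
      fun k => ?_) hx
  · rw [norm_mul, Real.norm_eq_abs, Real.norm_eq_abs, abs_mul, Nat.abs_cast, mul_comm (k : ℝ)]
    exact mul_le_mul_of_nonneg_left (abs_sum_binomWeight_mul_le (Set.Ioo_subset_Icc_self hy)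
      fun j hj => abs_pivotCount_le hj) (abs_nonneg _)
  · rw [norm_mul, Real.norm_eq_abs]
    exact mul_le_of_le_one_right (abs_nonneg _)
      (abs_sum_binomWeight_mul_le (Set.Ioo_subset_Icc_self hx) fun j _ => abs_colourInd_le)

/-- For a monotone two-colour tree automaton `A` and a child
distribution `χ` with finite mean, the automaton distribution map `Ψ` is
differentiable on `(0,1)` with `Ψ'(x)` equal to the expected number of pivotal
children at parameter `x` (Margulis–Russo formula). -/
theorem stmt_19 (A : ℕ → ℕ → Bool) (hA : ∀ n₀ n₁, A (n₀ + 1) n₁ ≤ A n₀ (n₁ + 1))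
    (χ : ℕ → ℝ) (hχ0 : ∀ k, 0 ≤ χ k) (hχ1 : ∑' k, χ k = 1)
    (hmean : Summable fun k : ℕ => (k : ℝ) * χ k) :
    ∀ x ∈ Set.Ioo (0 : ℝ) 1, HasDerivAt (autoPsi A χ) (autoPivMean A χ x) x :=
  stmt_19_general A hA χ hmean
end
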